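/- Under hypotheses (a1)–(a5), suppose that every positive solution of the difference equation x_{n+1} = f(x_n) tends to K, i.e. for every x₀ > 0 the sequence defined by iterating f starting from x₀ converges to K. Then every solution x of the initial value problem for the distributed-delay equation satisfies lim_{t→∞} x(t) = K. -/

import Mathlib

/-!
Write `F u = ∫ f (x s) dμ_u`; then `x' = r (F - x)`, so `x` relaxes towards a mean of the values of
`f ∘ x` over the delay window `[h u, u]`. A maximum principle for this relaxation equation, together
with `y < f y` on `(0, K)` and `f y < y` on `(K, ∞)`, keeps the solution positive and then, for
large times, inside a compact subinterval of `(0, ∞)`. As `∫ r = ∞` and the window moves off to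
infinity, `α = liminf x` and `β = limsup x` satisfy `[α, β] ⊆ f '' [α, β]`. Global attractivity of
`K` for the map `f` excludes positive 2-cycles, so `y < f (f y)` on `(0, K)`, and an interval
`[α, β] ⊆ (0, ∞)` covered by its own image must then be `{K}`.
-/

open MeasureTheory Filter Set Topology

section MapDynamics

variable {f : ℝ → ℝ} {K : ℝ}

lemma apply_eq_self_of_crossing (hf : Continuous f) (hK : 0 < K)
    (hf_below : ∀ y, 0 < y → y < K → y < f y) (hf_above : ∀ y, K < y → f y < y) :
    f K = K := by
  have hle : K ≤ f K :=
    (isClosed_le continuous_id hf).closure_subset_iff.mpr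
      (fun y (hy : y ∈ Ioo 0 K) => (hf_below y hy.1 hy.2).le)
      (by rw [closure_Ioo hK.ne]; exact ⟨hK.le, le_rfl⟩)
  have hge : f K ≤ K :=
    (isClosed_le hf continuous_id).closure_subset_iff.mpr
      (fun y (hy : y ∈ Ioi K) => (hf_above y hy).le) (by rw [closure_Ioi]; exact self_mem_Ici)
  exact le_antisymm hge hle

lemma eq_of_isPeriodicPt_two (hdiff : ∀ x₀, 0 < x₀ → Tendsto (fun n => f^[n] x₀) atTop (𝓝 K))
    {p : ℝ} (hp : 0 < p) (hper : Function.IsPeriodicPt f 2 p) : p = K := by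
  have hsub : Tendsto (fun n => f^[2 * n] p) atTop (𝓝 K) :=
    (hdiff p hp).comp (tendsto_id.const_mul_atTop' two_pos)
  simp only [(hper.mul_const _).eq] at hsub
  exact tendsto_nhds_unique tendsto_const_nhds hsub

lemma lt_apply_apply_of_mem_Ioo (hf : Continuous f) (hf0 : f 0 = 0) (hK : 0 < K)
    (hf_below : ∀ y, 0 < y → y < K → y < f y)
    (hdiff : ∀ x₀, 0 < x₀ → Tendsto (fun n => f^[n] x₀) atTop (𝓝 K))
    {y : ℝ} (hy : y ∈ Ioo 0 K) : y < f (f y) := by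
  by_contra! hle
  -- `f ∘ f - id` is positive near `0⁺` and nonpositive at `y`: a 2-periodic point in `(0, y]`
  obtain ⟨z, ⟨hzy, hfz⟩, hz0⟩ : ∃ z, (z < y ∧ f z < K) ∧ 0 < z := by
    have hfK : ∀ᶠ z in 𝓝 0, f z < K := (hf0 ▸ hf.tendsto 0).eventually_lt_const hK
    have hyz : ∀ᶠ z in 𝓝 (0 : ℝ), z < y := Iio_mem_nhds hy.1
    exact (((hyz.and hfK).filter_mono nhdsWithin_le_nhds).and
      (self_mem_nhdsWithin : Ioi (0 : ℝ) ∈ 𝓝[>] 0)).exists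
  have hfz' : z < f z := hf_below z hz0 (hzy.trans hy.2)
  have hz : z < f (f z) := hfz'.trans (hf_below _ (hz0.trans hfz') hfz)
  obtain ⟨p, hp, hpfix⟩ := intermediate_value_Icc' hzy.le
    ((hf.comp hf).sub continuous_id).continuousOn
    (show (0 : ℝ) ∈ Icc (f (f y) - y) (f (f z) - z) from ⟨by linarith, by linarith⟩)
  have hpK : p = K := eq_of_isPeriodicPt_two hdiff (hz0.trans_le hp.1)
    (sub_eq_zero.mp hpfix : f (f p) = p)
  linarith [hp.2, hy.2]

lemma eq_of_Icc_subset_image (hf : Continuous f) (hf0 : f 0 = 0) (hK : 0 < K)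
    (hf_below : ∀ y, 0 < y → y < K → y < f y) (hf_above : ∀ y, K < y → f y < y)
    (hdiff : ∀ x₀, 0 < x₀ → Tendsto (fun n => f^[n] x₀) atTop (𝓝 K))
    {a b : ℝ} (ha : 0 < a) (hab : a ≤ b) (hcover : Icc a b ⊆ f '' Icc a b) :
    a = K ∧ b = K := by
  have hfK := apply_eq_self_of_crossing hf hK hf_below hf_above
  obtain ⟨s, hs, hsb⟩ := hcover (right_mem_Icc.mpr hab)
  obtain ⟨t, ht, hta⟩ := hcover (left_mem_Icc.mpr hab)
  have hsK : s ≤ K := by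
    by_contra! hKs
    linarith [hf_above s hKs, hs.2]
  have hKt : K ≤ t := by
    by_contra! htK
    linarith [hf_below t (ha.trans_le ht.1) htK, ht.1]
  -- `f (f σ) = a ≤ σ`, which `lt_apply_apply_of_mem_Ioo` allows only for `σ = K`
  obtain ⟨σ, hσ, hfσ⟩ : t ∈ f '' Icc s K :=
    intermediate_value_Icc' hsK hf.continuousOn ⟨hfK.symm ▸ hKt, hsb ▸ ht.2⟩
  have hσK : σ = K := by
    by_contra hσK
    have := lt_apply_apply_of_mem_Ioo hf hf0 hK hf_below hdiff
      ⟨ha.trans_le (hs.1.trans hσ.1), lt_of_le_of_ne hσ.2 hσK⟩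
    rw [hfσ] at this
    linarith [hs.1, hσ.1]
  have htK : t = K := by rw [← hfσ, hσK, hfK]
  have haK : a = K := by rw [← hta, htK, hfK]
  have hsK' : s = K := le_antisymm hsK (haK ▸ hs.1)
  exact ⟨haK, by rw [← hsb, hsK', hfK]⟩

end MapDynamics

lemma Continuous.exists_first_eq {x : ℝ → ℝ} (hx : Continuous x) {a t c : ℝ} (hat : a ≤ t)
    (ha : c < x a) (ht : x t ≤ c) : ∃ t₁ ∈ Ioc a t, x t₁ = c ∧ ∀ s ∈ Ico a t₁, c < x s := by
  obtain ⟨t₁, ⟨ht₁, hxt₁⟩, hfirst⟩ :=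
    (isCompact_Icc.inter_right (isClosed_le hx continuous_const)).exists_isLeast
      ⟨t, right_mem_Icc.mpr hat, (ht : x t ≤ c)⟩
  have hbefore : ∀ s ∈ Ico a t₁, c < x s := fun s hs => by
    by_contra! hxs
    exact hs.2.not_ge (hfirst ⟨⟨hs.1, hs.2.le.trans ht₁.2⟩, hxs⟩)
  have hat₁ : a < t₁ := lt_of_le_of_ne ht₁.1 (by rintro rfl; exact ha.not_ge hxt₁)
  refine ⟨t₁, ⟨hat₁, ht₁.2⟩, le_antisymm hxt₁ ?_, hbefore⟩
  by_contra! hlt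
  obtain ⟨s, hs, hxs⟩ := intermediate_value_Icc' ht₁.1 hx.continuousOn ⟨hlt.le, ha.le⟩
  have hst₁ : s ≠ t₁ := by rintro rfl; exact hlt.ne hxs
  exact (hbefore s ⟨hs.1, lt_of_le_of_ne hs.2 hst₁⟩).ne' hxs

lemma IsOpen.exists_pos_Icc_sub_add_subset {U : Set ℝ} (hU : IsOpen U) {a b : ℝ} (hab : a ≤ b)
    (hsub : Icc a b ⊆ U) : ∃ ε > 0, Icc (a - ε) (b + ε) ⊆ U := by
  obtain ⟨ε, hε, hthick⟩ := isCompact_Icc.exists_cthickening_subset_open hU hsub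
  rw [Real.Icc_eq_closedBall, cthickening_closedBall hε.le (by linarith),
    Real.closedBall_eq_Icc] at hthick
  refine ⟨ε, hε, (Icc_subset_Icc ?_ ?_).trans hthick⟩ <;> linarith

lemma intervalIntegrable_of_ae_le {r : ℝ → ℝ} (hr_meas : Measurable r) (hr : ∀ u, 0 ≤ r u)
    {C : ℝ} (hC : ∀ᵐ u, r u ≤ C) (a b : ℝ) : IntervalIntegrable r volume a b := by
  have hbound : ∀ s : Set ℝ, ∀ᵐ u ∂volume.restrict s, ‖r u‖ ≤ C := fun s =>
    ae_restrict_of_ae (hC.mono fun u hu => (Real.norm_of_nonneg (hr u)).trans_le hu)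
  constructor <;>
    exact Measure.integrableOn_of_bounded measure_Ioc_lt_top.ne hr_meas.aestronglyMeasurable
      (hbound _)

lemma tendsto_intervalIntegral_atTop_of_not_integrableOn {r : ℝ → ℝ} (hr : ∀ u, 0 ≤ r u)
    (hr_int : ∀ a b, IntervalIntegrable r volume a b) {a : ℝ} (hdiv : ¬ IntegrableOn r (Ioi a)) :
    Tendsto (fun T => ∫ u in a..T, r u) atTop atTop := by
  refine tendsto_atTop_atTop_of_monotone (fun T₁ T₂ hT => ?_) fun A => ?_
  · rw [← intervalIntegral.integral_add_adjacent_intervals (hr_int a T₁) (hr_int T₁ T₂)]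
    linarith [intervalIntegral.integral_nonneg (μ := volume) hT fun u _ => hr u]
  · by_contra! hA
    have hnorm : ∀ u, ‖r u‖ = r u := fun u => Real.norm_of_nonneg (hr u)
    exact hdiv (integrableOn_Ioi_of_intervalIntegral_norm_bounded A a (fun T => (hr_int a T).1)
      tendsto_id (Eventually.of_forall fun T => by simpa only [hnorm] using (hA T).le))

structure SolvesRelaxation (r F x : ℝ → ℝ) : Prop where
  intervalIntegrable : ∀ ⦃a b⦄, 0 ≤ a → a ≤ b →
    IntervalIntegrable (fun u => r u * (F u - x u)) volume a b
  eq_add_integral : ∀ ⦃a b⦄, 0 ≤ a → a ≤ b → x b = x a + ∫ u in a..b, r u * (F u - x u)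

lemma SolvesRelaxation.of_eq_integral {r F x : ℝ → ℝ} {x₀ : ℝ}
    (hint : ∀ a b, 0 ≤ a → a ≤ b → IntervalIntegrable (fun u => r u * (F u - x u)) volume a b)
    (hsol : ∀ t, 0 ≤ t → x t = x₀ + ∫ u in (0 : ℝ)..t, r u * (F u - x u)) :
    SolvesRelaxation r F x where
  intervalIntegrable a b ha hab := hint a b ha hab
  eq_add_integral a b ha hab := by
    rw [hsol b (ha.trans hab), hsol a ha,
      ← intervalIntegral.integral_add_adjacent_intervals (hint 0 a le_rfl ha) (hint a b ha hab)]
    ring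

namespace SolvesRelaxation

variable {r F x : ℝ → ℝ} {a b c : ℝ}

lemma neg (hs : SolvesRelaxation r F x) : SolvesRelaxation r (-F) (-x) := by
  have hfun : (fun u => r u * ((-F) u - (-x) u)) = fun u => -(r u * (F u - x u)) :=
    funext fun u => by simp only [Pi.neg_apply]; ring
  refine ⟨fun a b ha hab => ?_, fun a b ha hab => ?_⟩
  · rw [hfun]
    exact (hs.intervalIntegrable ha hab).neg
  · rw [hfun, intervalIntegral.integral_neg, Pi.neg_apply, Pi.neg_apply, hs.eq_add_integral ha hab]
    ring

lemma sub_le_mul_integral (hs : SolvesRelaxation r F x) (hr : ∀ u, 0 ≤ r u)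
    (hr_int : IntervalIntegrable r volume a b) (ha : 0 ≤ a) (hab : a ≤ b)
    (hc : ∀ u ∈ Ioo a b, F u - x u ≤ c) : x b - x a ≤ c * ∫ u in a..b, r u := by
  rw [hs.eq_add_integral ha hab, add_sub_cancel_left, ← intervalIntegral.integral_const_mul]
  refine intervalIntegral.integral_mono_on_of_le_Ioo hab (hs.intervalIntegrable ha hab)
    (hr_int.const_mul c) fun u hu => ?_
  rw [mul_comm c]
  exact mul_le_mul_of_nonneg_left (hc u hu) (hr u)

lemma mul_integral_le_sub (hs : SolvesRelaxation r F x) (hr : ∀ u, 0 ≤ r u)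
    (hr_int : IntervalIntegrable r volume a b) (ha : 0 ≤ a) (hab : a ≤ b)
    (hc : ∀ u ∈ Ioo a b, c ≤ F u - x u) : c * ∫ u in a..b, r u ≤ x b - x a := by
  have := hs.neg.sub_le_mul_integral hr hr_int ha hab (c := -c) fun u hu => by
    simp only [Pi.neg_apply]
    linarith [hc u hu]
  simp only [Pi.neg_apply] at this
  linarith

lemma le_max (hs : SolvesRelaxation r F x) (hx : Continuous x) (hr : ∀ u, 0 ≤ r u)
    {t₀ t M : ℝ} (ht₀ : 0 ≤ t₀) (ht : t₀ ≤ t) (hF : ∀ u ∈ Ioc t₀ t, F u ≤ M) :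
    x t ≤ max (x t₀) M := by
  set c := max (x t₀) M
  by_contra! hct
  -- after the last time `s ≤ t` with `x s ≤ c`, we have `F ≤ c < x`, so `x` cannot increase
  obtain ⟨s, ⟨⟨hs₀, hst⟩, hxs⟩, hlast⟩ : ∃ s, IsGreatest (Icc t₀ t ∩ {u | x u ≤ c}) s :=
    ((isCompact_Icc.inter_right (isClosed_le hx continuous_const)).exists_isGreatest
      ⟨t₀, left_mem_Icc.mpr ht, (le_max_left _ _ : x t₀ ≤ c)⟩)
  have hx_gt : ∀ u ∈ Ioo s t, c < x u := fun u hu => by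
    by_contra! hxu
    exact hu.1.not_ge (hlast ⟨⟨hs₀.trans hu.1.le, hu.2.le⟩, hxu⟩)
  have hI : x t - x s ≤ 0 := by
    rw [hs.eq_add_integral (ht₀.trans hs₀) hst, add_sub_cancel_left]
    refine (intervalIntegral.integral_mono_on_of_le_Ioo hst
      (hs.intervalIntegrable (ht₀.trans hs₀) hst) intervalIntegrable_const fun u hu => ?_).trans_eq
      intervalIntegral.integral_zero
    have hFu : F u ≤ c := (hF u ⟨hs₀.trans_lt hu.1, hu.2.le⟩).trans (le_max_right _ _)
    exact mul_nonpos_of_nonneg_of_nonpos (hr u) (by linarith [hx_gt u hu])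
  linarith [show x s ≤ c from hxs]

lemma min_le (hs : SolvesRelaxation r F x) (hx : Continuous x) (hr : ∀ u, 0 ≤ r u)
    {t₀ t m : ℝ} (ht₀ : 0 ≤ t₀) (ht : t₀ ≤ t) (hF : ∀ u ∈ Ioc t₀ t, m ≤ F u) :
    min (x t₀) m ≤ x t := by
  have := hs.neg.le_max hx.neg hr ht₀ ht (M := -m) fun u hu => neg_le_neg (hF u hu)
  simp only [Pi.neg_apply, max_neg_neg] at this
  linarith

lemma eventually_le (hs : SolvesRelaxation r F x) (hx : Continuous x) (hr : ∀ u, 0 ≤ r u)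
    (hr_int : ∀ a b, IntervalIntegrable r volume a b)
    (hdiv : Tendsto (fun T => ∫ u in (0 : ℝ)..T, r u) atTop atTop) {M ε : ℝ}
    (hF : ∀ᶠ u in atTop, F u ≤ M) (hε : 0 < ε) : ∀ᶠ t in atTop, x t ≤ M + ε := by
  obtain ⟨t₀, ht₀⟩ := (hF.and (eventually_ge_atTop 0)).exists_forall_of_atTop
  have ht₀0 : 0 ≤ t₀ := (ht₀ t₀ le_rfl).2
  -- while `x > M + ε`, `x` decreases at rate at least `ε r`, and `∫ r` diverges
  obtain ⟨t₁, ht₀₁, ht₁⟩ : ∃ t₁, t₀ ≤ t₁ ∧ x t₁ ≤ M + ε := by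
    by_contra! hgt
    have hdiv' : Tendsto (fun T => ∫ u in t₀..T, r u) atTop atTop :=
      (tendsto_atTop_add_const_right _ (-∫ u in (0 : ℝ)..t₀, r u) hdiv).congr fun T => by
        rw [← sub_eq_add_neg, intervalIntegral.integral_interval_sub_left (hr_int _ _) (hr_int _ _)]
    obtain ⟨T, hT, hTI⟩ :=
      ((eventually_ge_atTop t₀).and (hdiv'.eventually_ge_atTop ((x t₀ - M) / ε))).exists
    have hdecay := hs.sub_le_mul_integral hr (hr_int t₀ T) ht₀0 hT (c := -ε) fun u hu => by
      linarith [hgt u hu.1.le, (ht₀ u hu.1.le).1]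
    have := (div_le_iff₀' hε).mp hTI
    linarith [hgt T hT]
  filter_upwards [eventually_ge_atTop t₁] with t ht
  exact (hs.le_max hx hr (ht₀0.trans ht₀₁) ht fun u hu => (ht₀ u (ht₀₁.trans hu.1.le)).1).trans
    (max_le ht₁ (by linarith))

lemma eventually_ge (hs : SolvesRelaxation r F x) (hx : Continuous x) (hr : ∀ u, 0 ≤ r u)
    (hr_int : ∀ a b, IntervalIntegrable r volume a b)
    (hdiv : Tendsto (fun T => ∫ u in (0 : ℝ)..T, r u) atTop atTop) {m ε : ℝ}
    (hF : ∀ᶠ u in atTop, m ≤ F u) (hε : 0 < ε) : ∀ᶠ t in atTop, m - ε ≤ x t := by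
  filter_upwards [hs.neg.eventually_le hx.neg hr hr_int hdiv (M := -m)
    (hF.mono fun u hu => neg_le_neg hu) hε] with t ht
  simp only [Pi.neg_apply] at ht
  linarith

lemma pos (hs : SolvesRelaxation r F x) (hx : Continuous x) (hr : ∀ u, 0 ≤ r u)
    (hr_int : ∀ a b, IntervalIntegrable r volume a b) (hx0 : 0 < x 0)
    (hF : ∀ u, 0 ≤ u → (∀ s ∈ Icc 0 u, 0 ≤ x s) → 0 ≤ F u) {t : ℝ} (ht : 0 ≤ t) : 0 < x t := by
  by_contra! hxt
  obtain ⟨t₁, ⟨ht₁0, -⟩, hxt₁, hpos⟩ := hx.exists_first_eq ht hx0 hxt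
  have hF₁ : ∀ u ∈ Icc 0 t₁, 0 ≤ F u := fun u hu => hF u hu.1 fun s hs => by
    rcases (hs.2.trans hu.2).lt_or_eq with h | rfl
    · exact (hpos s ⟨hs.1, h⟩).le
    · exact hxt₁.ge
  -- close to `t₁`, `∫ r < 1` is too little to bring `x` down from its maximum to `0`
  obtain ⟨τ, hτ, hτI⟩ : ∃ τ ∈ Ioo 0 t₁, ∫ u in τ..t₁, r u < 1 := by
    have hcont : Continuous fun τ => ∫ u in τ..t₁, r u :=
      (intervalIntegral.continuous_primitive hr_int t₁).neg.congr fun τ =>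
        (intervalIntegral.integral_symm t₁ τ).symm
    have hsmall : ∀ᶠ τ in 𝓝 t₁, ∫ u in τ..t₁, r u < 1 :=
      (hcont.tendsto t₁).eventually_lt_const (by rw [intervalIntegral.integral_same]; exact one_pos)
    obtain ⟨τ, hτI, hτ⟩ :=
      ((hsmall.filter_mono nhdsWithin_le_nhds).and (Ioo_mem_nhdsLT ht₁0)).exists
    exact ⟨τ, hτ, hτI⟩
  obtain ⟨σ, hσ, hσmax⟩ :=
    isCompact_Icc.exists_isMaxOn (nonempty_Icc.mpr hτ.2.le) hx.continuousOn
  have hxσ : 0 < x σ := (hpos τ ⟨hτ.1.le, hτ.2⟩).trans_le (hσmax (left_mem_Icc.mpr hτ.2.le))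
  have hσ0 : 0 ≤ σ := hτ.1.le.trans hσ.1
  have hdecay := hs.mul_integral_le_sub hr (hr_int σ t₁) hσ0 hσ.2 (c := -x σ) fun u hu => by
    have hxu : x u ≤ x σ := hσmax ⟨hσ.1.trans hu.1.le, hu.2.le⟩
    linarith [hF₁ u ⟨hσ0.trans hu.1.le, hu.2.le⟩]
  have hI : ∫ u in σ..t₁, r u ≤ ∫ u in τ..t₁, r u :=
    intervalIntegral.integral_mono_interval hσ.1 hσ.2 le_rfl (ae_of_all _ hr) (hr_int _ _)
  nlinarith [mul_lt_mul_of_pos_left (hI.trans_lt hτI) hxσ]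

end SolvesRelaxation

structure IsWindowMean (y h F : ℝ → ℝ) : Prop where
  le : ∀ ⦃u c⦄, 0 ≤ u → (∀ s ∈ Icc (h u) u, y s ≤ c) → F u ≤ c
  ge : ∀ ⦃u c⦄, 0 ≤ u → (∀ s ∈ Icc (h u) u, c ≤ y s) → c ≤ F u

lemma IsWindowMean.eventually_mem_Icc {y h F : ℝ → ℝ} (hm : IsWindowMean y h F)
    (hh : Tendsto h atTop atTop) {m M : ℝ} (hy : ∀ᶠ s in atTop, y s ∈ Icc m M) :
    ∀ᶠ u in atTop, F u ∈ Icc m M := by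
  obtain ⟨S, hS⟩ := hy.exists_forall_of_atTop
  filter_upwards [hh.eventually_ge_atTop S, eventually_ge_atTop 0] with u hu hu0
  exact ⟨hm.ge hu0 fun s hs => (hS s (hu.trans hs.1)).1,
    hm.le hu0 fun s hs => (hS s (hu.trans hs.1)).2⟩

namespace SolvesRelaxation

variable {f h r F x : ℝ → ℝ} {K : ℝ}

lemma exists_le_of_isWindowMean (hs : SolvesRelaxation r F x) (hx : Continuous x)
    (hr : ∀ u, 0 ≤ r u) (hm : IsWindowMean (f ∘ x) h F) (hx_nonneg : ∀ t, 0 ≤ x t) {C : ℝ}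
    (hC : ∀ t ≤ 0, x t ≤ C) (hf : Continuous f) (hf_above : ∀ y, K < y → f y < y) :
    ∃ B, ∀ t, 0 ≤ t → x t ≤ B := by
  obtain ⟨Cf, hCf⟩ := (isCompact_Icc (a := 0) (b := K)).bddAbove_image hf.continuousOn
  obtain ⟨B, hCB, hCfB, hKB⟩ : ∃ B, C ≤ B ∧ Cf ≤ B ∧ K ≤ B := ⟨max (max C Cf) K,
    le_max_of_le_left (le_max_left _ _), le_max_of_le_left (le_max_right _ _), le_max_right _ _⟩
  refine ⟨B, fun t ht => ?_⟩
  by_contra! hBt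
  obtain ⟨tm, htm, htm_max⟩ :=
    isCompact_Icc.exists_isMaxOn (nonempty_Icc.mpr ht) hx.continuousOn
  have hBV : B < x tm := hBt.trans_le (htm_max (right_mem_Icc.mpr ht))
  obtain ⟨ξ, hξ, hξ_max⟩ :=
    isCompact_Icc.exists_isMaxOn (nonempty_Icc.mpr (hx_nonneg tm)) hf.continuousOn
  have hfξ : f ξ < x tm := by
    rcases le_or_gt ξ K with hξK | hKξ
    · have : f ξ ≤ Cf := hCf (mem_image_of_mem f ⟨hξ.1, hξK⟩)
      linarith
    · exact (hf_above ξ hKξ).trans_le hξ.2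
  have hF : ∀ u ∈ Ioc 0 tm, F u ≤ f ξ := fun u hu => hm.le hu.1.le fun s hs => by
    refine hξ_max ⟨hx_nonneg s, ?_⟩
    rcases le_or_gt s 0 with hs0 | hs0
    · linarith [hC s hs0]
    · exact htm_max ⟨hs0.le, hs.2.trans (hu.2.trans htm.2)⟩
  have := hs.le_max hx hr le_rfl htm.1 hF
  exact (max_lt (by linarith [hC 0 le_rfl]) hfξ).not_ge this

lemma exists_pos_le_of_isWindowMean (hs : SolvesRelaxation r F x) (hx : Continuous x)
    (hr : ∀ u, 0 ≤ r u) (hm : IsWindowMean (f ∘ x) h F) (hh : Tendsto h atTop atTop)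
    (hx_pos : ∀ t, 0 ≤ t → 0 < x t) {B : ℝ} (hB : ∀ t, 0 ≤ t → x t ≤ B) (hf : Continuous f)
    (hf_below : ∀ y, 0 < y → y < K → y < f y) (hf_pos : ∀ y, K ≤ y → 0 < f y) :
    ∃ δ > 0, ∀ t, 0 ≤ t → δ ≤ x t := by
  obtain ⟨T₁, hT₁⟩ := (hh.eventually_ge_atTop 0).exists_forall_of_atTop
  set T := max T₁ 0
  obtain ⟨ρ, hρ, hρx⟩ := (isCompact_Icc (a := 0) (b := T)).exists_forall_le' hx.continuousOn
    fun t ht => hx_pos t ht.1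
  obtain ⟨c, hc, hcf⟩ := (isCompact_Icc (a := K) (b := B)).exists_forall_le' hf.continuousOn
    fun y hy => hf_pos y hy.1
  refine ⟨min ρ c, lt_min hρ hc, fun t ht => ?_⟩
  by_contra! hlt
  obtain ⟨tm, htm, htm_min⟩ :=
    isCompact_Icc.exists_isMinOn (nonempty_Icc.mpr ht) hx.continuousOn
  have hV : x tm < min ρ c := (htm_min (right_mem_Icc.mpr ht)).trans_lt hlt
  have hTtm : T < tm := by
    by_contra! htmT
    linarith [hρx tm ⟨htm.1, htmT⟩, min_le_left ρ c]
  obtain ⟨ξ, hξ, hξ_min⟩ :=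
    isCompact_Icc.exists_isMinOn (nonempty_Icc.mpr (hB tm htm.1)) hf.continuousOn
  have hfξ : x tm < f ξ := by
    rcases lt_or_ge ξ K with hξK | hKξ
    · exact hξ.1.trans_lt (hf_below ξ ((hx_pos tm htm.1).trans_le hξ.1) hξK)
    · linarith [hcf ξ ⟨hKξ, hξ.2⟩, min_le_right ρ c]
  have hF : ∀ u ∈ Ioc T tm, f ξ ≤ F u := fun u hu => by
    have hhu : 0 ≤ h u := hT₁ u ((le_max_left T₁ 0).trans hu.1.le)
    refine hm.ge ((le_max_right T₁ 0).trans hu.1.le) fun s hs => hξ_min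
      ⟨htm_min ⟨hhu.trans hs.1, hs.2.trans (hu.2.trans htm.2)⟩, hB s (hhu.trans hs.1)⟩
  have := hs.min_le hx hr (le_max_right T₁ 0) hTtm.le hF
  have hxT : x tm < x T := by
    linarith [hρx T ⟨le_max_right T₁ 0, le_rfl⟩, min_le_left ρ c]
  exact (lt_min hxT hfξ).not_ge this

lemma Icc_liminf_limsup_subset_image (hs : SolvesRelaxation r F x) (hx : Continuous x)
    (hr : ∀ u, 0 ≤ r u) (hr_int : ∀ a b, IntervalIntegrable r volume a b)
    (hdiv : Tendsto (fun T => ∫ u in (0 : ℝ)..T, r u) atTop atTop)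
    (hm : IsWindowMean (f ∘ x) h F) (hh : Tendsto h atTop atTop) (hf : Continuous f)
    (hbdd_le : IsBoundedUnder (· ≤ ·) atTop x) (hbdd_ge : IsBoundedUnder (· ≥ ·) atTop x) :
    Icc (liminf x atTop) (limsup x atTop) ⊆ f '' Icc (liminf x atTop) (limsup x atTop) := by
  set α := liminf x atTop
  set β := limsup x atTop
  have hαβ : α ≤ β := liminf_le_limsup hbdd_le hbdd_ge
  rw [hf.continuousOn.image_Icc hαβ]
  set m := sInf (f '' Icc α β)
  set M := sSup (f '' Icc α β)
  -- `f` maps a neighbourhood `[α - ε, β + ε]` of `[α, β]` into `[m - η, M + η]`, and `x`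
  -- eventually stays in that neighbourhood
  have hF : ∀ η > 0, ∀ᶠ u in atTop, F u ∈ Icc (m - η) (M + η) := fun η hη => by
    refine hm.eventually_mem_Icc hh ?_
    have hopen : IsOpen (f ⁻¹' Ioo (m - η) (M + η)) := isOpen_Ioo.preimage hf
    obtain ⟨ε, hε, hsub⟩ := hopen.exists_pos_Icc_sub_add_subset hαβ fun y hy =>
        ⟨by linarith [hf.continuousOn.sInf_image_Icc_le hy],
          by linarith [hf.continuousOn.le_sSup_image_Icc hy]⟩
    filter_upwards [eventually_lt_of_lt_liminf (sub_lt_self α hε) hbdd_ge,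
      eventually_lt_of_limsup_lt (lt_add_of_pos_right β hε) hbdd_le] with t h₁ h₂
    exact Ioo_subset_Icc_self (hsub ⟨h₁.le, h₂.le⟩)
  refine Icc_subset_Icc (le_of_forall_pos_le_add fun η hη => ?_)
    (le_of_forall_pos_le_add fun η hη => ?_)
  · rw [← sub_le_iff_le_add]
    refine le_liminf_of_le hbdd_le.isCoboundedUnder_ge ?_
    filter_upwards [hs.eventually_ge hx hr hr_int hdiv ((hF (η / 2) (half_pos hη)).mono
      fun u hu => hu.1) (half_pos hη)] with t ht
    linarith
  · refine limsup_le_of_le hbdd_ge.isCoboundedUnder_le ?_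
    filter_upwards [hs.eventually_le hx hr hr_int hdiv ((hF (η / 2) (half_pos hη)).mono
      fun u hu => hu.2) (half_pos hη)] with t ht
    linarith

theorem tendsto_of_isWindowMean (hs : SolvesRelaxation r F x) (hx : Continuous x)
    (hr : ∀ u, 0 ≤ r u) (hr_int : ∀ a b, IntervalIntegrable r volume a b)
    (hdiv : Tendsto (fun T => ∫ u in (0 : ℝ)..T, r u) atTop atTop)
    (hm : IsWindowMean (f ∘ x) h F) (hh : Tendsto h atTop atTop) (hx0 : 0 < x 0)
    (hx_past : ∀ t ≤ 0, 0 ≤ x t) {C : ℝ} (hC : ∀ t ≤ 0, x t ≤ C)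
    (hf : Continuous f) (hf0 : f 0 = 0) (hf_nonneg : ∀ y, 0 ≤ y → 0 ≤ f y) (hK : 0 < K)
    (hf_below : ∀ y, 0 < y → y < K → y < f y) (hf_above : ∀ y, K < y → 0 < f y ∧ f y < y)
    (hdiff : ∀ x₀, 0 < x₀ → Tendsto (fun n => f^[n] x₀) atTop (𝓝 K)) :
    Tendsto x atTop (𝓝 K) := by
  have hfK := apply_eq_self_of_crossing hf hK hf_below fun y hy => (hf_above y hy).2
  have hx_pos : ∀ t, 0 ≤ t → 0 < x t := fun t => hs.pos hx hr hr_int hx0 fun u hu hxu =>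
    hm.ge hu fun s hs => hf_nonneg _ <| (le_total s 0).elim (hx_past s) fun hs0 => hxu s ⟨hs0, hs.2⟩
  have hx_nonneg : ∀ t, 0 ≤ x t := fun t =>
    (le_total t 0).elim (hx_past t) fun ht => (hx_pos t ht).le
  obtain ⟨B, hB⟩ :=
    hs.exists_le_of_isWindowMean hx hr hm hx_nonneg hC hf fun y hy => (hf_above y hy).2
  obtain ⟨δ, hδ, hδx⟩ := hs.exists_pos_le_of_isWindowMean hx hr hm hh hx_pos hB hf hf_below
    fun y hy => hy.eq_or_lt.elim (fun hKy => hKy ▸ hfK.symm ▸ hK) fun hKy => (hf_above y hKy).1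
  have hbdd_le : IsBoundedUnder (· ≤ ·) atTop x :=
    isBoundedUnder_of_eventually_le ((eventually_ge_atTop 0).mono hB)
  have hbdd_ge : IsBoundedUnder (· ≥ ·) atTop x :=
    isBoundedUnder_of_eventually_ge ((eventually_ge_atTop 0).mono hδx)
  have hδα : δ ≤ liminf x atTop :=
    le_liminf_of_le hbdd_le.isCoboundedUnder_ge ((eventually_ge_atTop 0).mono hδx)
  obtain ⟨hαK, hβK⟩ := eq_of_Icc_subset_image hf hf0 hK hf_below (fun y hy => (hf_above y hy).2)
    hdiff (hδ.trans_le hδα) (liminf_le_limsup hbdd_le hbdd_ge)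
    (hs.Icc_liminf_limsup_subset_image hx hr hr_int hdiv hm hh hf hbdd_le hbdd_ge)
  exact tendsto_of_liminf_eq_limsup hαK hβK hbdd_le hbdd_ge

end SolvesRelaxation

lemma exists_forall_abs_comp_le {f x : ℝ → ℝ} (hf : Continuous f) (hx : Continuous x) {C : ℝ}
    (hC : ∀ t ≤ 0, |x t| ≤ C) (b : ℝ) : ∃ C', ∀ s ≤ b, |f (x s)| ≤ C' := by
  obtain ⟨X, hX⟩ := (isCompact_Icc (a := 0) (b := b)).exists_bound_of_continuousOn hx.continuousOn
  obtain ⟨Y, hY⟩ := (isCompact_Icc (a := -max C X) (b := max C X)).exists_bound_of_continuousOn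
    hf.continuousOn
  refine ⟨Y, fun s hs => hY _ (abs_le.mp ?_)⟩
  rcases le_or_gt s 0 with hs0 | hs0
  · exact (hC s hs0).trans (le_max_left _ _)
  · exact (hX s ⟨hs0.le, hs⟩).trans (le_max_right _ _)

section DelayMeasure

variable {μ : ℝ → Measure ℝ} {h : ℝ → ℝ}

lemma isWindowMean_integral (hμ_prob : ∀ t, 0 ≤ t → IsProbabilityMeasure (μ t))
    (hμ_supp : ∀ t, 0 ≤ t → μ t (Icc (h t) t)ᶜ = 0) {y : ℝ → ℝ} (hy : Continuous y) :
    IsWindowMean y h fun u => ∫ s, y s ∂μ u := by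
  have key : ∀ u, 0 ≤ u → Integrable y (μ u) ∧ ∀ᵐ s ∂μ u, s ∈ Icc (h u) u := fun u hu => by
    have := hμ_prob u hu
    have hae : ∀ᵐ s ∂μ u, s ∈ Icc (h u) u := mem_ae_iff.mpr (hμ_supp u hu)
    obtain ⟨C, hC⟩ := isCompact_Icc.exists_bound_of_continuousOn (s := Icc (h u) u) hy.continuousOn
    exact ⟨(integrable_const C).mono' hy.aestronglyMeasurable (hae.mono hC), hae⟩
  refine ⟨fun u c hu hle => ?_, fun u c hu hge => ?_⟩
  · have := hμ_prob u hu
    simpa using integral_mono_ae (key u hu).1 (integrable_const c) ((key u hu).2.mono hle)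
  · have := hμ_prob u hu
    simpa using integral_mono_ae (integrable_const c) (key u hu).1 ((key u hu).2.mono hge)

lemma intervalIntegrable_mul_integral_sub (hμ_prob : ∀ t, 0 ≤ t → IsProbabilityMeasure (μ t))
    (hμ_supp : ∀ t, 0 ≤ t → μ t (Icc (h t) t)ᶜ = 0)
    (hμ_meas : ∀ g : ℝ → ℝ, Measurable g → (∃ C : ℝ, ∀ y : ℝ, |g y| ≤ C) →
      Measurable (fun t => ∫ s, g s ∂(μ t)))
    {r x y : ℝ → ℝ} (hr_int : ∀ a b, IntervalIntegrable r volume a b)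
    (hx : Continuous x) (hy : Continuous y) (hy_bdd : ∀ b, ∃ C, ∀ s ≤ b, |y s| ≤ C)
    {a b : ℝ} (ha : 0 ≤ a) (hab : a ≤ b) :
    IntervalIntegrable (fun u => r u * ((∫ s, y s ∂μ u) - x u)) volume a b := by
  obtain ⟨C, hC⟩ := hy_bdd b
  obtain ⟨X, hX⟩ := (isCompact_Icc (a := a) (b := b)).exists_bound_of_continuousOn hx.continuousOn
  have hsupp : ∀ u ∈ Ioc a b, ∀ᵐ s ∂μ u, s ≤ b := fun u hu =>
    (show ∀ᵐ s ∂μ u, s ∈ Icc (h u) u from mem_ae_iff.mpr (hμ_supp u (ha.trans hu.1.le))).mono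
      fun s hs => hs.2.trans hu.2
  -- `y` agrees with the bounded measurable `y ∘ min · b` on the supports, where `hμ_meas` applies
  have hmeas : Measurable fun u => ∫ s, y (min s b) ∂μ u :=
    hμ_meas _ (hy.comp (continuous_id.min continuous_const)).measurable
      ⟨C, fun s => hC _ (min_le_right _ _)⟩
  have htrunc : ∀ u ∈ Ioc a b, ∫ s, y (min s b) ∂μ u = ∫ s, y s ∂μ u := fun u hu =>
    integral_congr_ae ((hsupp u hu).mono fun s hs => by simp only [min_eq_left hs])
  rw [intervalIntegrable_iff_integrableOn_Ioc_of_le hab]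
  refine (hr_int a b).1.mul_bdd (c := C + X) ?_ ?_
  · exact (hmeas.sub hx.measurable).aestronglyMeasurable.congr
      ((ae_restrict_mem measurableSet_Ioc).mono fun u hu => by
        simp only [Pi.sub_apply, htrunc u hu])
  · refine (ae_restrict_mem measurableSet_Ioc).mono fun u hu => ?_
    have := hμ_prob u (ha.trans hu.1.le)
    have hint : ‖∫ s, y s ∂μ u‖ ≤ C := by
      simpa using norm_integral_le_of_norm_le_const (f := y)
        ((hsupp u hu).mono fun s hs => (Real.norm_eq_abs _).trans_le (hC s hs))
    exact (norm_sub_le _ _).trans (add_le_add hint (hX u (Ioc_subset_Icc_self hu)))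

end DelayMeasure

theorem distributed_delay_stability_from_difference_equation_general
    (f : ℝ → ℝ) (K : ℝ) (hK : 0 < K)
    (h r : ℝ → ℝ) (μ : ℝ → Measure ℝ) (φ : ℝ → ℝ)
    (hf_cont : Continuous f)
    (hf_nonneg : ∀ y : ℝ, 0 ≤ y → 0 ≤ f y)
    (hf_zero : f 0 = 0)
    (hf_below : ∀ y : ℝ, 0 < y → y < K → y < f y)
    (hf_above : ∀ y : ℝ, K < y → 0 < f y ∧ f y < y)
    (hh_tend : Tendsto h atTop atTop)
    (hr_meas : Measurable r)
    (hr_nonneg : ∀ t : ℝ, 0 ≤ r t)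
    (hr_bdd : ∃ C : ℝ, ∀ᵐ t ∂volume, r t ≤ C)
    (hr_div : ¬ IntegrableOn r (Ici (0 : ℝ)))
    (hμ_prob : ∀ t : ℝ, 0 ≤ t → IsProbabilityMeasure (μ t))
    (hμ_supp : ∀ t : ℝ, 0 ≤ t → μ t (Icc (h t) t)ᶜ = 0)
    (hμ_meas : ∀ g : ℝ → ℝ, Measurable g → (∃ C : ℝ, ∀ y : ℝ, |g y| ≤ C) →
      Measurable (fun t => ∫ s, g s ∂(μ t)))
    (hφ_bdd : ∃ C : ℝ, ∀ t : ℝ, t ≤ 0 → |φ t| ≤ C)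
    (hφ_nonneg : ∀ t : ℝ, t ≤ 0 → 0 ≤ φ t)
    (hφ_pos : 0 < φ 0)
    (hdiff : ∀ x₀ : ℝ, 0 < x₀ → Tendsto (fun n => f^[n] x₀) atTop (nhds K))
    (x : ℝ → ℝ)
    (hx_cont : Continuous x)
    (hx_init : ∀ t : ℝ, t ≤ 0 → x t = φ t)
    (hx_sol : ∀ t : ℝ, 0 ≤ t →
      x t = φ 0 + ∫ u in (0:ℝ)..t, r u * ((∫ s, f (x s) ∂(μ u)) - x u))
    :
    Tendsto x atTop (nhds K) := by
  obtain ⟨Cr, hCr⟩ := hr_bdd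
  obtain ⟨Cφ, hCφ⟩ := hφ_bdd
  have hx_past : ∀ t ≤ 0, |x t| ≤ Cφ := fun t ht => hx_init t ht ▸ hCφ t ht
  have hr_int := intervalIntegrable_of_ae_le hr_meas hr_nonneg hCr
  have hs : SolvesRelaxation r (fun u => ∫ s, f (x s) ∂μ u) x :=
    .of_eq_integral (fun a b ha hab => intervalIntegrable_mul_integral_sub (y := fun s => f (x s))
      hμ_prob hμ_supp hμ_meas hr_int hx_cont (hf_cont.comp hx_cont)
      (exists_forall_abs_comp_le hf_cont hx_cont hx_past) ha hab) hx_sol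
  have hdiv := tendsto_intervalIntegral_atTop_of_not_integrableOn hr_nonneg hr_int
    fun hint => hr_div ((integrableOn_Ici_iff_integrableOn_Ioi).mpr hint)
  exact hs.tendsto_of_isWindowMean hx_cont hr_nonneg hr_int hdiv
    (isWindowMean_integral hμ_prob hμ_supp (hf_cont.comp hx_cont)) hh_tend
    (hx_init 0 le_rfl ▸ hφ_pos) (fun t ht => hx_init t ht ▸ hφ_nonneg t ht)
    (fun t ht => (le_abs_self _).trans (hx_past t ht)) hf_cont hf_zero hf_nonneg hK hf_below
    hf_above hdiff

theorem distributed_delay_stability_from_difference_equation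
    (f : ℝ → ℝ) (L K : ℝ) (hL : 0 ≤ L) (hK : 0 < K)
    (h r : ℝ → ℝ) (μ : ℝ → Measure ℝ) (φ : ℝ → ℝ)
    (hf_cont : Continuous f)
    (hf_nonneg : ∀ y : ℝ, 0 ≤ y → 0 ≤ f y)
    (hf_lip : ∀ u v : ℝ, 0 ≤ u → 0 ≤ v → |f u - f v| ≤ L * |u - v|)
    (hf_zero : f 0 = 0)
    (hf_below : ∀ y : ℝ, 0 < y → y < K → y < f y)
    (hf_above : ∀ y : ℝ, K < y → 0 < f y ∧ f y < y)
    (hh_meas : Measurable h)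
    (hh_le : ∀ t : ℝ, 0 ≤ t → h t ≤ t)
    (hh_tend : Tendsto h atTop atTop)
    (hr_meas : Measurable r)
    (hr_nonneg : ∀ t : ℝ, 0 ≤ r t)
    (hr_bdd : ∃ C : ℝ, ∀ᵐ t ∂volume, r t ≤ C)
    (hr_div : ¬ IntegrableOn r (Ici (0 : ℝ)))
    (hμ_prob : ∀ t : ℝ, 0 ≤ t → IsProbabilityMeasure (μ t))
    (hμ_supp : ∀ t : ℝ, 0 ≤ t → μ t (Icc (h t) t)ᶜ = 0)
    (hμ_meas : ∀ g : ℝ → ℝ, Measurable g → (∃ C : ℝ, ∀ y : ℝ, |g y| ≤ C) →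
      Measurable (fun t => ∫ s, g s ∂(μ t)))
    (hφ_cont : ContinuousOn φ (Iic (0 : ℝ)))
    (hφ_bdd : ∃ C : ℝ, ∀ t : ℝ, t ≤ 0 → |φ t| ≤ C)
    (hφ_nonneg : ∀ t : ℝ, t ≤ 0 → 0 ≤ φ t)
    (hφ_pos : 0 < φ 0)
    (hdiff : ∀ x₀ : ℝ, 0 < x₀ → Tendsto (fun n => f^[n] x₀) atTop (nhds K))
    (x : ℝ → ℝ)
    (hx_cont : Continuous x)
    (hx_init : ∀ t : ℝ, t ≤ 0 → x t = φ t)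
    (hx_sol : ∀ t : ℝ, 0 ≤ t →
      x t = φ 0 + ∫ u in (0:ℝ)..t, r u * ((∫ s, f (x s) ∂(μ u)) - x u))
    :
    Tendsto x atTop (nhds K) :=
  distributed_delay_stability_from_difference_equation_general f K hK h r μ φ hf_cont hf_nonneg
    hf_zero hf_below hf_above hh_tend hr_meas hr_nonneg hr_bdd hr_div hμ_prob hμ_supp hμ_meas hφ_bdd
    hφ_nonneg hφ_pos hdiff x hx_cont hx_init hx_sol
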